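/- arXiv:math/9605211 — 3 statements merged into one kernel-verified Lean document; each statement's English description precedes it below -/
import Mathlib

section
/- Let κ be a regular uncountable cardinal. If principle C⁻(κ) holds, then principle D⁻(κ) holds. -/
open Cardinal

/-- `C` is closed and unbounded (club) in the ordinal `o`. -/
def ClubIn (o : Ordinal) (C : Set Ordinal) : Prop :=
  C ⊆ Set.Iio o ∧ (∀ α < o, ∃ β ∈ C, α < β) ∧
    ∀ α < o, 0 < α → (∀ β < α, ∃ γ ∈ C, β < γ ∧ γ < α) → α ∈ C

/-- `S` is a stationary subset of the ordinal `o`: it meets every club subset of `o`. -/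
def StationaryIn (o : Ordinal) (S : Set Ordinal) : Prop :=
  S ⊆ Set.Iio o ∧ ∀ C, ClubIn o C → (S ∩ C).Nonempty

/-- `S` is a cofinal (unbounded) subset of the ordinal `o`. -/
def CofinalIn (o : Ordinal) (S : Set Ordinal) : Prop :=
  S ⊆ Set.Iio o ∧ ∀ α < o, ∃ β ∈ S, α < β

/-- For a matrix `A` of subsets of `ℕ`, a finite sequence `t ∈ ω^{<ω}` and
`s : {0,…,|t|-1} → Ordinal`, this is `A[s,t] = ⋂_{i<|t|} A(s i, t i)`. -/
def MatInt (A : Ordinal → ℕ → Set ℕ) (t : List ℕ) (s : Fin t.length → Ordinal) : Set ℕ :=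
  ⋂ i, A (s i) (t.get i)

/-- Principle C⁻(κ). -/
def PrincipleCminus (κ : Cardinal) : Prop :=
  ∀ (T : Set (List ℕ)) (A : Ordinal → ℕ → Set ℕ),
    (∃ S : Set Ordinal, CofinalIn κ.ord S ∧
      ∀ t ∈ T, ∀ s : Fin t.length → Ordinal, Function.Injective s →
        (∀ i, s i ∈ S) → (MatInt A t s).Nonempty) ∨
    (∃ t ∈ T, ∃ D : Fin t.length → Set Ordinal,
      (∀ i, CofinalIn κ.ord (D i)) ∧
      ∀ s : Fin t.length → Ordinal, Function.Injective s →
        (∀ i, s i ∈ D i) → MatInt A t s = ∅)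

/-- A family of subsets of `ℕ` is centered if every finite subfamily has
nonempty intersection. -/
def Centered (L : Set (Set ℕ)) : Prop :=
  ∀ F : Finset (Set ℕ), ↑F ⊆ L → (⋂₀ (F : Set (Set ℕ))).Nonempty

/-- The restriction of the matrix `A` to `S` is ω-adic. -/
def OmegaAdicOn (A : Ordinal → ℕ → Set ℕ) (S : Set Ordinal) : Prop :=
  ∀ (t : List ℕ) (s : Fin t.length → Ordinal), Function.Injective s →
    (∀ i, s i ∈ S) → (MatInt A t s).Nonempty

/-- `L(A)`: the sets `Y ⊆ ℕ` such that `{α < κ : ∃ n, A(α,n) ⊆ Y}` has cardinality `κ`. -/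
def Lcard (κ : Cardinal.{0}) (A : Ordinal.{0} → ℕ → Set ℕ) : Set (Set ℕ) :=
  {Y : Set ℕ | #{α : Ordinal | α < κ.ord ∧ ∃ n : ℕ, A α n ⊆ Y} = Cardinal.lift.{1,0} κ}

/-- Principle D⁻(κ). -/
def PrincipleDminus (κ : Cardinal.{0}) : Prop :=
  ∀ A : Ordinal.{0} → ℕ → Set ℕ, Centered (Lcard κ A) →
    ∃ S : Set Ordinal, CofinalIn κ.ord S ∧ OmegaAdicOn A S

/-!
Apply C⁻(κ) to `T = ω^{<ω}`. Its first alternative is D⁻(κ) verbatim, so suppose the second one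
gives `t` and cofinal `D₀, …, D_{k-1}` with `A[s,t] = ∅` whenever `s i ∈ D i`. For `β < κ` the sets
`Y_i(β) = ⋃ {A(α, t i) : α ∈ D i, β < α}` lie in `L(A)`, so centeredness yields `m_β ∈ ⋂_i Y_i(β)`.
As `cf κ > ω`, a single `m` equals `m_β` for cofinally many `β`; then each
`W_i = {α ∈ D i : m ∈ A(α, t i)}` is cofinal, and a strictly increasing choice `s i ∈ W i` puts `m`
into the empty set `A[s,t]`.
-/

universe u

namespace CofinalIn

variable {o : Ordinal.{u}} {S : Set Ordinal.{u}}

theorem inter_Ioi (hS : CofinalIn o S) {β : Ordinal} (hβ : β < o) :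
    CofinalIn o (S ∩ Set.Ioi β) := by
  refine ⟨fun α hα => hS.1 hα.1, fun γ hγ => ?_⟩
  obtain ⟨α, hαS, hα⟩ := hS.2 (max β γ) (max_lt hβ hγ)
  exact ⟨α, ⟨hαS, (le_max_left β γ).trans_lt hα⟩, (le_max_right β γ).trans_lt hα⟩

theorem lift_cof_le_mk (hS : CofinalIn o S) : Cardinal.lift.{u + 1} o.cof ≤ #S := by
  have hcofinal : IsCofinal (Subtype.val ⁻¹' S : Set (Set.Iio o)) := fun γ => by
    obtain ⟨β, hβS, hγβ⟩ := hS.2 γ γ.2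
    exact ⟨⟨β, hS.1 hβS⟩, hβS, hγβ.le⟩
  calc Cardinal.lift.{u + 1} o.cof = Order.cof (Set.Iio o) := by
        rw [Ordinal.cof_Iio, Ordinal.lift_cof]
    _ ≤ #(Subtype.val ⁻¹' S : Set (Set.Iio o)) := Order.cof_le hcofinal
    _ = #S := mk_preimage_of_injective_of_subset_range _ _ Subtype.val_injective
        (by rw [Subtype.range_coe]; exact hS.1)

end CofinalIn

theorem exists_cofinalIn_of_lt_cof {o : Ordinal.{u}} (ho : Order.IsSuccLimit o) {ι : Type u}
    (hι : #ι < o.cof) {P : ι → Ordinal.{u} → Prop} (hP : ∀ β < o, ∃ i, P i β) :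
    ∃ i, CofinalIn o {β | β < o ∧ P i β} := by
  by_contra! hbounded
  have : ∀ i, ∃ γ < o, ∀ β < o, P i β → β ≤ γ := fun i => by
    by_contra! hcofinal
    refine hbounded i ⟨fun β hβ => hβ.1, fun γ hγ => ?_⟩
    obtain ⟨β, hβ, hPβ, hγβ⟩ := hcofinal γ hγ
    exact ⟨β, ⟨hβ, hPβ⟩, hγβ⟩
  choose g hgo hg using this
  have hsup : Order.succ (⨆ i, g i) < o := ho.succ_lt (Ordinal.iSup_lt_of_lt_cof hι hgo)
  obtain ⟨i, hi⟩ := hP _ hsup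
  exact (Order.lt_succ _).not_ge ((hg i _ hsup hi).trans (Ordinal.le_iSup g i))

theorem exists_strictMono_forall_mem {o : Ordinal.{u}} (ho : 0 < o) :
    ∀ {k : ℕ} {W : Fin k → Set Ordinal.{u}}, (∀ i, CofinalIn o (W i)) →
      ∃ s : Fin k → Ordinal, StrictMono s ∧ ∀ i, s i ∈ W i
  | 0, _, _ => ⟨Fin.elim0, fun i => i.elim0, fun i => i.elim0⟩
  | k + 1, W, hW => by
    obtain ⟨s, hs, hsW⟩ := exists_strictMono_forall_mem ho fun i => hW i.castSucc
    have hsup : Finset.univ.sup s < o :=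
      (Finset.sup_lt_iff ho).2 fun i _ => (hW i.castSucc).1 (hsW i)
    obtain ⟨α, hαW, hα⟩ := (hW (Fin.last k)).2 _ hsup
    refine ⟨Fin.snoc s α, fun i j hij => ?_, Fin.lastCases ?_ ?_⟩
    · obtain ⟨i, rfl⟩ := Fin.exists_castSucc_eq.2 (Fin.ne_last_of_lt hij)
      induction j using Fin.lastCases with
      | last =>
        rw [Fin.snoc_castSucc, Fin.snoc_last]
        exact (Finset.le_sup (Finset.mem_univ i)).trans_lt hα
      | cast j =>
        rw [Fin.snoc_castSucc, Fin.snoc_castSucc]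
        exact hs (Fin.castSucc_lt_castSucc_iff.1 hij)
    · simpa using hαW
    · intro i
      simpa using hsW i

theorem Centered.exists_forall_mem {L : Set (Set ℕ)} (hL : Centered L) {ι : Type*} [Finite ι]
    {Y : ι → Set ℕ} (hY : ∀ i, Y i ∈ L) : ∃ m, ∀ i, m ∈ Y i := by
  classical
  have := Fintype.ofFinite ι
  obtain ⟨m, hm⟩ := hL (Finset.univ.image Y) (by simpa [Set.range_subset_iff] using hY)
  exact ⟨m, fun i => hm _ (by simp)⟩

theorem mem_Lcard_of_cofinalIn {κ : Cardinal.{0}} (hκ : κ.IsRegular) {A : Ordinal → ℕ → Set ℕ}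
    {E : Set Ordinal} {Y : Set ℕ} (hE : CofinalIn κ.ord E) (hEY : ∀ α ∈ E, ∃ n, A α n ⊆ Y) :
    Y ∈ Lcard κ A := by
  apply le_antisymm
  · calc _ ≤ #(Set.Iio κ.ord) := mk_le_mk_of_subset fun α hα => hα.1
      _ = _ := by rw [mk_Iio_ordinal, card_ord]
  · calc Cardinal.lift.{1} κ = Cardinal.lift.{1} κ.ord.cof := by rw [hκ.cof_ord]
      _ ≤ #E := hE.lift_cof_le_mk
      _ ≤ #{α : Ordinal | α < κ.ord ∧ ∃ n, A α n ⊆ Y} :=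
        mk_le_mk_of_subset fun α hα => ⟨hE.1 hα, hEY α hα⟩

/-- If κ is a regular uncountable cardinal and C⁻(κ) holds, then D⁻(κ) holds. -/
theorem statement_1 (κ : Cardinal.{0}) (hreg : κ.IsRegular) (hunc : ℵ₀ < κ)
    (hC : PrincipleCminus κ) : PrincipleDminus κ := by
  intro A hcent
  rcases hC Set.univ A with ⟨S, hS, hne⟩ | ⟨t, -, D, hD, hempty⟩
  · exact ⟨S, hS, fun t s hs hsS => hne t trivial s hs hsS⟩
  exfalso
  let Y i β := ⋃ α ∈ D i ∩ Set.Ioi β, A α (t.get i)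
  have hY : ∀ β < κ.ord, ∀ i, Y i β ∈ Lcard κ A := fun β hβ i =>
    mem_Lcard_of_cofinalIn hreg ((hD i).inter_Ioi hβ) fun α hα =>
      ⟨t.get i, Set.subset_biUnion_of_mem (u := fun α => A α (t.get i)) hα⟩
  obtain ⟨m, hm⟩ := exists_cofinalIn_of_lt_cof (isSuccLimit_ord hunc.le)
    (by rwa [mk_nat, hreg.cof_ord]) fun β hβ => hcent.exists_forall_mem (hY β hβ)
  have hW : ∀ i, CofinalIn κ.ord {α | α ∈ D i ∧ m ∈ A α (t.get i)} := fun i => by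
    refine ⟨fun α hα => (hD i).1 hα.1, fun γ hγ => ?_⟩
    obtain ⟨β, ⟨-, hβm⟩, hγβ⟩ := hm.2 γ hγ
    obtain ⟨α, ⟨hαD, hβα⟩, hmα⟩ := Set.mem_iUnion₂.1 (hβm i)
    exact ⟨α, ⟨hαD, hmα⟩, hγβ.trans hβα⟩
  obtain ⟨s, hs, hsW⟩ := exists_strictMono_forall_mem (ord_pos.2 (aleph0_pos.trans hunc)) hW
  have hms : m ∈ MatInt A t s := Set.mem_iInter.2 fun i => (hsW i).2
  rwa [hempty s hs.injective fun i => (hsW i).1] at hms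
end

section
/- Let κ be a regular uncountable cardinal and assume principle C⁻(κ). Then there is no κ-Luzin gap, i.e., there is no almost disjoint family 𝓐 of infinite subsets of ℕ with |𝓐| = κ such that no X ⊆ ℕ satisfies both |{A ∈ 𝓐 : A ∖ X is finite}| = κ and |{A ∈ 𝓐 : A ∩ X is finite}| = κ. -/
/-!
Enumerate the family as `(f α)_{α < κ}` and apply C⁻(κ) to the matrix `A(α, n) = f α \ [0, n]`
with `T = {⟨n, n⟩ : n ∈ ℕ}`. The first alternative yields two distinct members of the family
whose intersection is unbounded, contradicting almost disjointness. The second yields `n` and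
cofinal `D₀, D₁` with `f α ∩ f β ⊆ [0, n]` whenever `α ∈ D₀`, `β ∈ D₁` differ. Cofinal subsets
of a regular `κ` have size `κ`, so they can be shrunk to disjoint `E₀ ⊆ D₀`, `E₁ ⊆ D₁` of size
`κ`; then `X = ⋃_{α ∈ E₀} f α` contains every `f α` with `α ∈ E₀` and meets every `f β` with
`β ∈ E₁` inside `[0, n]`, so the family is not a gap.
-/

open Cardinal

universe u

section Cardinality

variable {α : Type u}

lemma exists_disjoint_halves_of_aleph0_le {s : Set α} (hs : ℵ₀ ≤ #s) :
    ∃ u ⊆ s, ∃ v ⊆ s, Disjoint u v ∧ #u = #s ∧ #v = #s := by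
  obtain ⟨e⟩ : Nonempty (s ⊕ s ≃ s) := Cardinal.eq.mp (by simpa using add_eq_self hs)
  have hinl : Function.Injective fun x : s => (e (.inl x) : α) :=
    Subtype.val_injective.comp (e.injective.comp Sum.inl_injective)
  have hinr : Function.Injective fun x : s => (e (.inr x) : α) :=
    Subtype.val_injective.comp (e.injective.comp Sum.inr_injective)
  refine ⟨_, Set.range_subset_iff.2 fun x => (e _).2, _, Set.range_subset_iff.2 fun x => (e _).2,
    ?_, mk_range_eq _ hinl, mk_range_eq _ hinr⟩
  rw [Set.disjoint_left]
  rintro _ ⟨x, rfl⟩ ⟨y, hy⟩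
  exact Sum.inr_ne_inl (e.injective (Subtype.ext hy))

lemma exists_disjoint_subsets_of_mk_eq {κ : Cardinal.{u}} (hκ : ℵ₀ ≤ κ) {s t : Set α}
    (hs : #s = κ) (ht : #t = κ) :
    ∃ s' ⊆ s, ∃ t' ⊆ t, Disjoint s' t' ∧ #s' = κ ∧ #t' = κ := by
  by_cases hdiff : #(s \ t : Set α) = κ
  · exact ⟨s \ t, Set.sdiff_subset, t, subset_rfl, Set.disjoint_sdiff_left, hdiff, ht⟩
  have hinter : #(s ∩ t : Set α) = κ := by
    refine le_antisymm (hs ▸ mk_le_mk_of_subset Set.inter_subset_left) (not_lt.1 fun hlt => ?_)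
    have hdiff_lt : #(s \ t : Set α) < κ :=
      (hs ▸ mk_le_mk_of_subset Set.sdiff_subset).lt_of_ne hdiff
    refine (add_lt_of_lt hκ hdiff_lt hlt).not_ge ?_
    calc κ = #(s \ t ∪ s ∩ t : Set α) := by rw [Set.sdiff_union_inter, hs]
      _ ≤ _ := mk_union_le _ _
  obtain ⟨u, hu, v, hv, huv, huκ, hvκ⟩ := exists_disjoint_halves_of_aleph0_le (hinter ▸ hκ)
  exact ⟨u, hu.trans Set.inter_subset_left, v, hv.trans Set.inter_subset_right, huv,
    huκ.trans hinter, hvκ.trans hinter⟩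

lemma mk_sep_eq_of_injOn {κ : Cardinal.{u}} {𝓐 : Set α} (h𝓐 : #𝓐 = κ) {P : α → Prop}
    {f : Ordinal.{u} → α} {E : Set Ordinal.{u}} (hf : Set.InjOn f E) (hE : #E = lift.{u + 1} κ)
    (hfE : ∀ x ∈ E, f x ∈ 𝓐 ∧ P (f x)) : #{A | A ∈ 𝓐 ∧ P A} = κ := by
  refine le_antisymm (h𝓐 ▸ mk_le_mk_of_subset fun _ hA => hA.1) ?_
  have himage : lift.{u + 1} #(f '' E) = #E := by
    rw [mk_image_eq_of_injOn_lift f E hf, lift_id'.{u, u + 1}]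
  rw [← lift_le.{u + 1}, ← hE, ← himage, lift_le]
  exact mk_le_mk_of_subset (Set.image_subset_iff.2 hfE)

lemma exists_injOn_Iio_ord [Nonempty α] {s : Set α} {κ : Cardinal.{u}}
    (hs : #s = κ) : ∃ f : Ordinal.{u} → α, Set.InjOn f (Set.Iio κ.ord) ∧
      Set.MapsTo f (Set.Iio κ.ord) s := by
  obtain ⟨e⟩ : Nonempty (Set.Iio κ.ord ≃ s) := by
    rw [← lift_mk_eq'.{u + 1, u}, mk_Iio_ordinal, card_ord, hs, lift_lift]
  refine ⟨fun a => if h : a < κ.ord then e ⟨a, h⟩ else Classical.arbitrary α, ?_, ?_⟩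
  · intro a (ha : a < κ.ord) b (hb : b < κ.ord) hab
    simp only [dif_pos ha, dif_pos hb] at hab
    exact congrArg Subtype.val (e.injective (Subtype.ext hab))
  · intro a (ha : a < κ.ord)
    simp only [dif_pos ha]
    exact (e _).2

end Cardinality

lemma CofinalIn.exists_lt {o : Ordinal} {S : Set Ordinal} (hS : CofinalIn o S) (ho : 0 < o) :
    ∃ α ∈ S, ∃ β ∈ S, α < β := by
  obtain ⟨α, hα, -⟩ := hS.2 0 ho
  obtain ⟨β, hβ, hαβ⟩ := hS.2 α (hS.1 hα)
  exact ⟨α, hα, β, hβ, hαβ⟩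

lemma CofinalIn.mk_eq {κ : Cardinal.{u}} (hκ : κ.IsRegular) {D : Set Ordinal.{u}}
    (hD : CofinalIn κ.ord D) : #D = lift.{u + 1} κ := by
  refine le_antisymm ?_ ?_
  · simpa using mk_le_mk_of_subset hD.1
  · have hcof : IsCofinal (Subtype.val ⁻¹' D : Set (Set.Iio κ.ord)) := fun a => by
      obtain ⟨β, hβ, hlt⟩ := hD.2 a a.2
      exact ⟨⟨β, hD.1 hβ⟩, hβ, hlt.le⟩
    calc lift.{u + 1} κ = Order.cof (Set.Iio κ.ord) := by
          rw [Ordinal.cof_Iio, ← Ordinal.lift_cof, hκ.cof_ord]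
      _ ≤ #(Subtype.val ⁻¹' D : Set (Set.Iio κ.ord)) := Order.cof_le hcof
      _ ≤ #D := mk_preimage_of_injective _ _ Subtype.val_injective

def tailMatrix (f : Ordinal → Set ℕ) : Ordinal → ℕ → Set ℕ := fun α n => f α ∩ Set.Ioi n

lemma matInt_pair (A : Ordinal → ℕ → Set ℕ) (n : ℕ) (α β : Ordinal) :
    MatInt A [n, n] ![α, β] = A α n ∩ A β n := by
  ext m
  simp [MatInt, Fin.forall_fin_two]

lemma infinite_inter_of_forall_matInt_nonempty {f : Ordinal → Set ℕ} {α β : Ordinal}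
    (h : ∀ n, (MatInt (tailMatrix f) [n, n] ![α, β]).Nonempty) : (f α ∩ f β).Infinite := by
  refine Set.infinite_iff_exists_gt.2 fun n => ?_
  obtain ⟨m, ⟨hmα, hm⟩, hmβ, -⟩ := matInt_pair (tailMatrix f) n α β ▸ h n
  exact ⟨m, ⟨hmα, hmβ⟩, hm⟩

lemma inter_subset_Iic_of_matInt_eq_empty {f : Ordinal → Set ℕ} {n : ℕ} {α β : Ordinal}
    (h : MatInt (tailMatrix f) [n, n] ![α, β] = ∅) : f α ∩ f β ⊆ Set.Iic n := by
  rintro m ⟨hmα, hmβ⟩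
  by_contra hm
  rw [Set.mem_Iic, not_le] at hm
  rw [matInt_pair] at h
  exact h.subset ⟨⟨hmα, hm⟩, hmβ, hm⟩

lemma exists_separating_set {ι : Type*} {f : ι → Set ℕ} {E₀ E₁ : Set ι} (hE : Disjoint E₀ E₁)
    {n : ℕ} (hf : ∀ i ∈ E₀, ∀ j ∈ E₁, i ≠ j → f i ∩ f j ⊆ Set.Iic n) :
    ∃ X : Set ℕ, (∀ i ∈ E₀, (f i \ X).Finite) ∧ ∀ j ∈ E₁, (f j ∩ X).Finite := by
  refine ⟨⋃ i ∈ E₀, f i, fun i hi => ?_, fun j hj => (Set.finite_Iic n).subset ?_⟩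
  · rw [Set.sdiff_eq_empty.2 (Set.subset_biUnion_of_mem hi)]
    exact Set.finite_empty
  · rw [Set.inter_iUnion₂]
    refine Set.iUnion₂_subset fun i hi => ?_
    rw [Set.inter_comm]
    exact hf i hi j hj (hE.ne_of_mem hi hj)

theorem statement_13_general (κ : Cardinal.{0}) (hreg : κ.IsRegular)
    (hC : PrincipleCminus κ) :
    ¬ ∃ 𝓐 : Set (Set ℕ),
        (∀ A ∈ 𝓐, A.Infinite) ∧
        (∀ A ∈ 𝓐, ∀ A' ∈ 𝓐, A ≠ A' → (A ∩ A').Finite) ∧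
        #𝓐 = κ ∧
        ¬ ∃ X : Set ℕ, #{A : Set ℕ | A ∈ 𝓐 ∧ (A \ X).Finite} = κ ∧
            #{A : Set ℕ | A ∈ 𝓐 ∧ (A ∩ X).Finite} = κ := by
  rintro ⟨𝓐, -, had, h𝓐, hgap⟩
  obtain ⟨f, hf_inj, hf_maps⟩ := exists_injOn_Iio_ord h𝓐
  rcases hC (Set.range fun n => [n, n]) (tailMatrix f) with
    ⟨S, hS, hS_ne⟩ | ⟨_, ⟨n, rfl⟩, D, hD, hD_empty⟩
  · obtain ⟨α, hα, β, hβ, hαβ⟩ := hS.exists_lt (ord_pos.2 hreg.pos)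
    refine infinite_inter_of_forall_matInt_nonempty (fun n => hS_ne _ ⟨n, rfl⟩ _
      (injective_pair_iff_ne.2 hαβ.ne) (Fin.forall_fin_two.2 ⟨hα, hβ⟩)) ?_
    exact had _ (hf_maps (hS.1 hα)) _ (hf_maps (hS.1 hβ)) (hf_inj.ne (hS.1 hα) (hS.1 hβ) hαβ.ne)
  · obtain ⟨E₀, hE₀, E₁, hE₁, hE, hE₀κ, hE₁κ⟩ := exists_disjoint_subsets_of_mk_eq
      (aleph0_le_lift.2 hreg.aleph0_le) ((hD 0).mk_eq hreg) ((hD 1).mk_eq hreg)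
    obtain ⟨X, hX₀, hX₁⟩ := exists_separating_set (f := f) hE fun α hα β hβ hαβ =>
      inter_subset_Iic_of_matInt_eq_empty <| hD_empty _ (injective_pair_iff_ne.2 hαβ)
        (Fin.forall_fin_two.2 ⟨hE₀ hα, hE₁ hβ⟩)
    exact hgap ⟨X,
      mk_sep_eq_of_injOn h𝓐 (hf_inj.mono (hE₀.trans (hD 0).1)) hE₀κ
        fun α hα => ⟨hf_maps ((hD 0).1 (hE₀ hα)), hX₀ α hα⟩,
      mk_sep_eq_of_injOn h𝓐 (hf_inj.mono (hE₁.trans (hD 1).1)) hE₁κ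
        fun β hβ => ⟨hf_maps ((hD 1).1 (hE₁ hβ)), hX₁ β hβ⟩⟩

/-- Under C⁻(κ), there is no κ-Luzin gap. -/
theorem statement_13 (κ : Cardinal.{0}) (hreg : κ.IsRegular) (hunc : ℵ₀ < κ)
    (hC : PrincipleCminus κ) :
    ¬ ∃ 𝓐 : Set (Set ℕ),
        (∀ A ∈ 𝓐, A.Infinite) ∧
        (∀ A ∈ 𝓐, ∀ A' ∈ 𝓐, A ≠ A' → (A ∩ A').Finite) ∧
        #𝓐 = κ ∧
        ¬ ∃ X : Set ℕ, #{A : Set ℕ | A ∈ 𝓐 ∧ (A \ X).Finite} = κ ∧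
            #{A : Set ℕ | A ∈ 𝓐 ∧ (A ∩ X).Finite} = κ :=
  statement_13_general κ hreg hC
end

section
/- Let κ be a regular uncountable cardinal and assume principle E⁻(κ). Then for every family 𝓐 of subsets of ℕ with |𝓐| = κ, either (a) there is a natural number k ≥ 1 such that the set I_k(𝓐) = {⋂𝓐' : 𝓐' is a k-element subfamily of 𝓐} has cardinality κ, or (b) there is a subfamily 𝓑 ⊆ 𝓐 of cardinality κ such that I_{<ω}(𝓑) = ⋃_{k≥1} I_k(𝓑) is countable. -/
open Cardinal

/-- Principle E⁻(κ). -/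
def PrincipleEminus (κ : Cardinal) : Prop :=
  ∀ (T : Set (List ℕ)) (A : Ordinal → ℕ → Set ℕ),
    (∃ S : Set Ordinal, CofinalIn κ.ord S ∧
      {X : Set ℕ | ∃ t ∈ T, ∃ s : Fin (List.length t) → Ordinal,
        Function.Injective s ∧ (∀ i, s i ∈ S) ∧ X = MatInt A t s}.Countable) ∨
    (∃ t ∈ T, ∃ D : Fin t.length → Set Ordinal,
      (∀ i, CofinalIn κ.ord (D i)) ∧
      ∀ s₀ s₁ : Fin t.length → Ordinal, Function.Injective s₀ → Function.Injective s₁ →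
        (∀ i, s₀ i ∈ D i) → (∀ i, s₁ i ∈ D i) → (∀ i, s₀ i ≠ s₁ i) →
          MatInt A t s₀ ≠ MatInt A t s₁)

/-- `I_k(𝓐)`: the set of intersections of k-element subfamilies of 𝓐. -/
def Ik (𝓐 : Set (Set ℕ)) (k : ℕ) : Set (Set ℕ) :=
  {X : Set ℕ | ∃ F : Finset (Set ℕ), ↑F ⊆ 𝓐 ∧ F.card = k ∧ X = ⋂₀ (F : Set (Set ℕ))}

/-!
Enumerate `𝓐` injectively as `f α` (`α < κ`) and apply `E⁻(κ)` to the matrix `A(α, n) = f α`,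
so that `A[s, t] = ⋂ i, f (s i)`. A cofinal `S` with countably many such intersections gives
`𝓑 = f[S]`, of size `κ` because `κ` is regular. Otherwise some `t` and cofinal `D i` separate
coordinatewise distinct selectors. Choose for every `β < κ` a strictly increasing selector above
`β`; if `I_|t|(𝓐)` had fewer than `κ` elements, then by pigeonhole on the regular cardinal `κ`
some intersection would be attained cofinally often, in particular by two selectors one lying
entirely above the other, which `E⁻(κ)` forbids.
-/

open Set Function Order

section Ordinals

universe u

variable {κ : Cardinal.{u}} {o : Ordinal.{u}}

theorem exists_mapsTo_injOn_Iio_ord {α : Type u} [Nonempty α] (s : Set α) :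
    ∃ f : Ordinal.{u} → α, MapsTo f (Iio (#s).ord) s ∧ InjOn f (Iio (#s).ord) := by
  classical
  obtain ⟨e⟩ : Nonempty (Iio (#s).ord ≃ s) := lift_mk_eq'.1 (by simp)
  refine ⟨fun β => if h : β < (#s).ord then e ⟨β, h⟩ else Classical.arbitrary α,
    fun β hβ => ?_, fun β hβ γ hγ h => ?_⟩
  · simp only [mem_Iio] at hβ
    simp only [dif_pos hβ, Subtype.coe_prop]
  · simp only [mem_Iio] at hβ hγ
    simp only [dif_pos hβ, dif_pos hγ, Subtype.coe_inj, e.apply_eq_iff_eq] at h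
    exact congrArg Subtype.val h

theorem cofinalIn_Iio (ho : IsSuccLimit o) : CofinalIn o (Iio o) :=
  ⟨subset_rfl, fun α hα => ⟨succ α, ho.succ_lt hα, lt_succ α⟩⟩

theorem exists_strictMono_mem_of_cofinalIn :
    ∀ {k : ℕ} (D : Fin k → Set Ordinal.{u}), (∀ i, CofinalIn o (D i)) → ∀ β < o,
      ∃ s : Fin k → Ordinal.{u}, StrictMono s ∧ ∀ i, s i ∈ D i ∧ β < s i
  | 0, _, _, _, _ => ⟨Fin.elim0, fun i => i.elim0, fun i => i.elim0⟩
  | k + 1, D, hD, β, hβ => by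
    obtain ⟨b, hbD, hβb⟩ := (hD 0).2 β hβ
    obtain ⟨s, hs, hsD⟩ :=
      exists_strictMono_mem_of_cofinalIn (D ∘ Fin.succ) (fun i => hD i.succ) b ((hD 0).1 hbD)
    refine ⟨Fin.cons b s, Fin.strictMono_cons.2 ⟨fun j => (hsD j).2, hs⟩, Fin.cases ?_ ?_⟩
    · exact ⟨hbD, hβb⟩
    · exact fun i => ⟨(hsD i).1, hβb.trans (hsD i).2⟩

theorem exists_cofinalIn_fiber (hκ : κ.IsRegular) {S : Set Ordinal.{u}} (hS : CofinalIn κ.ord S)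
    {γ : Type u} {g : Ordinal.{u} → γ} {Y : Set γ} (hg : MapsTo g S Y) (hY : #Y < κ) :
    ∃ y ∈ Y, CofinalIn κ.ord {β | β ∈ S ∧ g β = y} := by
  by_contra! h
  have hbounded : ∀ y : Y, ∃ α < κ.ord, ∀ β ∈ S, g β = y → β ≤ α := by
    intro y
    by_contra! hy
    refine h y y.2 ⟨fun β hβ => hS.1 hβ.1, fun α hα => ?_⟩
    obtain ⟨β, hβS, hβ, hαβ⟩ := hy α hα
    exact ⟨β, ⟨hβS, hβ⟩, hαβ⟩
  choose b hb hbound using hbounded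
  have hsup : ⨆ y, b y < κ.ord := Ordinal.iSup_lt_of_lt_cof (by rwa [hκ.cof_ord]) hb
  obtain ⟨β, hβS, hβ⟩ := hS.2 _ hsup
  exact hβ.not_ge ((hbound ⟨g β, hg hβS⟩ β hβS rfl).trans (Ordinal.le_iSup b _))

theorem le_mk_image_of_cofinalIn (hκ : κ.IsRegular) {S : Set Ordinal.{u}}
    (hS : CofinalIn κ.ord S) {α : Type u} {f : Ordinal.{u} → α} (hf : InjOn f S) :
    κ ≤ #(f '' S) := by
  by_contra! h
  obtain ⟨y, -, hy⟩ := exists_cofinalIn_fiber hκ hS (mapsTo_image f S) h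
  obtain ⟨β₀, ⟨hβ₀S, hβ₀⟩, -⟩ := hy.2 0 (ord_pos.2 hκ.pos)
  obtain ⟨β₁, ⟨hβ₁S, hβ₁⟩, hlt⟩ := hy.2 β₀ (hS.1 hβ₀S)
  exact hlt.ne (hf hβ₀S hβ₁S (hβ₀.trans hβ₁.symm))

end Ordinals

section Intersections

variable {𝓐 : Set (Set ℕ)}

theorem mk_Ik_le_mk_finset (𝓐 : Set (Set ℕ)) (k : ℕ) : #(Ik 𝓐 k) ≤ #(Finset 𝓐) := by
  classical
  refine (mk_le_mk_of_subset (t := range fun F : Finset 𝓐 => ⋂₀ ↑(F.map (Embedding.subtype _)))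
    ?_).trans mk_range_le
  rintro _ ⟨F, hF, -, rfl⟩
  refine ⟨F.subtype (· ∈ 𝓐), ?_⟩
  dsimp only
  rw [Finset.subtype_map, Finset.filter_true_of_mem fun x hx => hF hx]

theorem iInter_mem_Ik {k : ℕ} {g : Fin k → Set ℕ} (hg : Injective g) (h𝓐 : ∀ i, g i ∈ 𝓐) :
    ⋂ i, g i ∈ Ik 𝓐 k := by
  classical
  refine ⟨Finset.univ.image g, ?_, ?_, ?_⟩
  · simpa [subset_def] using h𝓐
  · rw [Finset.card_image_of_injective _ hg, Finset.card_univ, Fintype.card_fin]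
  · simp [sInter_range]

theorem exists_injective_sInter_eq_iInter {β : Type*} [Nonempty β] {f : β → Set ℕ} {S : Set β}
    {F : Finset (Set ℕ)} (hF : ↑F ⊆ f '' S) {m : ℕ} (hm : F.card = m) :
    ∃ s : Fin m → β, Injective s ∧ (∀ i, s i ∈ S) ∧ ⋂₀ ↑F = ⋂ i, f (s i) := by
  subst hm
  set e := F.equivFin.symm
  have hfs : ∀ i, f (invFunOn f S (e i)) = e i := fun i => invFunOn_eq (hF (e i).2)
  refine ⟨fun i => invFunOn f S (e i), fun i j h => e.injective (Subtype.ext ?_),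
    fun i => invFunOn_mem (hF (e i).2), ?_⟩
  · rw [← hfs i, ← hfs j, show invFunOn f S (e i) = invFunOn f S (e j) from h]
  · simp_rw [hfs, sInter_eq_iInter]
    exact (e.surjective.iInter_comp (fun x : F => (x : Set ℕ))).symm

end Intersections

section Dichotomy

variable {κ : Cardinal.{0}} {𝓐 : Set (Set ℕ)} {f : Ordinal.{0} → Set ℕ}

theorem iUnion_Ik_image_subset (S : Set Ordinal.{0}) :
    ⋃ k, Ik (f '' S) k ⊆ {X | ∃ t ∈ (univ : Set (List ℕ)), ∃ s : Fin t.length → Ordinal,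
      Injective s ∧ (∀ i, s i ∈ S) ∧ X = MatInt (fun α _ => f α) t s} := by
  simp only [iUnion_subset_iff]
  rintro k _ ⟨F, hF, -, rfl⟩
  obtain ⟨s, hs, hsS, hFs⟩ := exists_injective_sInter_eq_iInter hF
    (m := (List.replicate F.card 0).length) (by simp)
  exact ⟨List.replicate F.card 0, trivial, s, hs, hsS, hFs⟩

theorem le_mk_Ik_of_separating (hκ : κ.IsRegular) (hfA : MapsTo f (Iio κ.ord) 𝓐)
    (hf : InjOn f (Iio κ.ord)) {k : ℕ} (hk : 0 < k) (D : Fin k → Set Ordinal)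
    (hD : ∀ i, CofinalIn κ.ord (D i))
    (hsep : ∀ s₀ s₁ : Fin k → Ordinal, Injective s₀ → Injective s₁ →
      (∀ i, s₀ i ∈ D i) → (∀ i, s₁ i ∈ D i) → (∀ i, s₀ i ≠ s₁ i) →
        ⋂ i, f (s₀ i) ≠ ⋂ i, f (s₁ i)) :
    κ ≤ #(Ik 𝓐 k) := by
  choose! sel hmono hsel using
    fun β (hβ : β < κ.ord) => exists_strictMono_mem_of_cofinalIn D hD β hβ
  have hsel_lt : ∀ β < κ.ord, ∀ i, sel β i < κ.ord := fun β hβ i => (hD i).1 (hsel β hβ i).1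
  have hmem : MapsTo (fun β => ⋂ i, f (sel β i)) (Iio κ.ord) (Ik 𝓐 k) := fun β hβ =>
    iInter_mem_Ik
      ((hf.injective_iff _ (range_subset_iff.2 (hsel_lt β hβ))).2 (hmono β hβ).injective)
      fun i => hfA (hsel_lt β hβ i)
  by_contra! hlt
  obtain ⟨X, -, hX⟩ :=
    exists_cofinalIn_fiber hκ (cofinalIn_Iio (isSuccLimit_ord hκ.aleph0_le)) hmem hlt
  obtain ⟨β₀, ⟨hβ₀, rfl⟩, -⟩ := hX.2 0 (ord_pos.2 hκ.pos)
  let last : Fin k := ⟨k - 1, by omega⟩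
  obtain ⟨β₁, ⟨hβ₁, heq⟩, hβ₀β₁⟩ := hX.2 (sel β₀ last) (hsel_lt β₀ hβ₀ last)
  -- every entry of `sel β₀` lies below `β₁`, and every entry of `sel β₁` above it
  have hdisjoint : ∀ i, sel β₀ i ≠ sel β₁ i := fun i =>
    ((hmono β₀ hβ₀).monotone (Fin.mk_le_mk.2 (by omega : i.val ≤ k - 1)) |>.trans_lt
      (hβ₀β₁.trans (hsel β₁ hβ₁ i).2)).ne
  exact hsep _ _ (hmono β₀ hβ₀).injective (hmono β₁ hβ₁).injective (fun i => (hsel β₀ hβ₀ i).1)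
    (fun i => (hsel β₁ hβ₁ i).1) hdisjoint heq.symm

end Dichotomy

theorem statement_16_general (κ : Cardinal.{0}) (hreg : κ.IsRegular)
    (hE : PrincipleEminus κ)
    (𝓐 : Set (Set ℕ)) (hcard : #𝓐 = κ) :
    (∃ k : ℕ, 1 ≤ k ∧ #(Ik 𝓐 k) = κ) ∨
    (∃ 𝓑 ⊆ 𝓐, #𝓑 = κ ∧ (⋃ k ∈ {k : ℕ | 1 ≤ k}, Ik 𝓑 k).Countable) := by
  obtain ⟨f, hfA, hf⟩ := exists_mapsTo_injOn_Iio_ord 𝓐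
  rw [hcard] at hfA hf
  rcases hE univ (fun α _ => f α) with ⟨S, hS, hcount⟩ | ⟨t, -, D, hD, hsep⟩
  · have hB : f '' S ⊆ 𝓐 := (hfA.mono_left hS.1).image_subset
    refine Or.inr ⟨f '' S, hB, ?_, hcount.mono ?_⟩
    · exact le_antisymm (hcard ▸ mk_le_mk_of_subset hB)
        (le_mk_image_of_cofinalIn hreg hS (hf.mono hS.1))
    · exact (iUnion₂_subset_iUnion _ _).trans (iUnion_Ik_image_subset S)
  · have hk : 0 < t.length := Nat.pos_of_ne_zero fun h0 => by
      have : IsEmpty (Fin t.length) := by rw [h0]; infer_instance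
      exact hsep 0 0 (injective_of_subsingleton _) (injective_of_subsingleton _)
        isEmptyElim isEmptyElim isEmptyElim rfl
    have : Infinite 𝓐 := infinite_iff.2 (hcard ▸ hreg.aleph0_le)
    refine Or.inl ⟨t.length, hk, le_antisymm ?_ (le_mk_Ik_of_separating hreg hfA hf hk D hD hsep)⟩
    exact (mk_Ik_le_mk_finset 𝓐 _).trans_eq (by rw [mk_finset_of_infinite, hcard])

/-- Under E⁻(κ), for any κ-sized family 𝓐 of subsets of ℕ, either `I_k(𝓐)` has
cardinality κ for some `k ≥ 1`, or some κ-sized subfamily 𝓑 has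
`I_{<ω}(𝓑) = ⋃_{k ≥ 1} I_k(𝓑)` countable. -/
theorem statement_16 (κ : Cardinal.{0}) (hreg : κ.IsRegular) (hunc : ℵ₀ < κ)
    (hE : PrincipleEminus κ)
    (𝓐 : Set (Set ℕ)) (hcard : #𝓐 = κ) :
    (∃ k : ℕ, 1 ≤ k ∧ #(Ik 𝓐 k) = κ) ∨
    (∃ 𝓑 ⊆ 𝓐, #𝓑 = κ ∧ (⋃ k ∈ {k : ℕ | 1 ≤ k}, Ik 𝓑 k).Countable) :=
  statement_16_general κ hreg hE 𝓐 hcard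
end
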